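/- ISTA step remains feasible and decreases the objective sufficiently: for a convex function F = g + h with g convex lower semicontinuous and h convex differentiable with L-Lipschitz gradient, one step of the proximal gradient method α⁺ = prox_{(1/L)g}(α − (1/L)∇h(α)) satisfies F(α⁺) ≤ F(β) + (L/2)‖β − α‖² − (L/2)‖β − α⁺‖² for all β in the domain; in particular F(α⁺) ≤ F(α). -/

import Mathlib

/-!
With `u = α - L⁻¹ • ∇h α`, the prox point `α⁺` minimizes the `L`-strongly convex function
`g + (L/2)‖· - u‖²`, so it beats every `β ∈ S` by the margin `(L/2)‖β - α⁺‖²`. Expanding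
`(L/2)‖x - u‖² = (L/2)‖x - α‖² + ⟪∇h α, x - α⟫ + const` turns this into a comparison of the
models `g x + h α + ⟪∇h α, x - α⟫ + (L/2)‖x - α‖²` at `α⁺` and at `β`. The model bounds `F`
from above at `α⁺` (descent lemma for an `L`-Lipschitz gradient) and exceeds `F β` by at most
`(L/2)‖β - α‖²` (gradient inequality for convex `h`).
-/

open InnerProductSpace Set Filter Topology AffineMap

section

variable {E : Type*} [NormedAddCommGroup E] [InnerProductSpace ℝ E]

lemma le_of_forall_mem_Ioc_add_one_sub_mul_le {a b c : ℝ}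
    (h : ∀ t ∈ Ioc (0 : ℝ) 1, a + (1 - t) * b ≤ c) : a + b ≤ c := by
  have hlim : Tendsto (fun t : ℝ => a + (1 - t) * b) (𝓝[>] 0) (𝓝 (a + b)) := by
    have hcont : Continuous (fun t : ℝ => a + (1 - t) * b) := by fun_prop
    simpa using (hcont.tendsto 0).mono_left nhdsWithin_le_nhds
  refine le_of_tendsto hlim ?_
  filter_upwards [Ioc_mem_nhdsGT_of_mem (left_mem_Ico.2 one_pos)] with t ht using h t ht

lemma IsMinOn.add_half_mul_norm_sub_sq_le {s : Set E} {f : E → ℝ} {m : ℝ} {p x : E}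
    (hmin : IsMinOn f s p) (hf : StrongConvexOn s m f) (hp : p ∈ s) (hx : x ∈ s) :
    f p + m / 2 * ‖x - p‖ ^ 2 ≤ f x := by
  refine le_of_forall_mem_Ioc_add_one_sub_mul_le fun t ⟨ht₀, ht₁⟩ => ?_
  have hcomb := hf.2 hp hx (sub_nonneg.2 ht₁) ht₀.le (sub_add_cancel 1 t)
  have hle := isMinOn_iff.1 hmin _ (hf.1 hp hx (sub_nonneg.2 ht₁) ht₀.le (sub_add_cancel 1 t))
  simp only [smul_eq_mul, norm_sub_rev p x] at hcomb
  -- divide `t * f p + t * (1 - t) * m / 2 * ‖x - p‖ ^ 2 ≤ t * f x` by `t > 0`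
  refine le_of_mul_le_mul_left ?_ ht₀
  nlinarith

lemma ConvexOn.strongConvexOn_add_half_mul_norm_sub_sq {s : Set E} {g : E → ℝ}
    (hg : ConvexOn ℝ s g) (m : ℝ) (u : E) :
    StrongConvexOn s m (fun x => g x + m / 2 * ‖x - u‖ ^ 2) := by
  rw [strongConvexOn_iff_convex]
  have hlin := ((innerₛₗ ℝ (-(m • u))).convexOn hg.1).add_const (m / 2 * ‖u‖ ^ 2)
  refine (hg.add hlin).congr fun x _ => ?_
  simp only [Pi.add_apply, innerₛₗ_apply_apply, norm_sub_sq_real, inner_neg_left,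
    real_inner_smul_left, real_inner_comm u x]
  ring

lemma HasGradientAt.hasDerivAt_comp_lineMap [CompleteSpace E] {f : E → ℝ} {f' a b : E} {t : ℝ}
    (hf : HasGradientAt f f' (lineMap a b t)) :
    HasDerivAt (fun s => f (lineMap a b s)) ⟪f', b - a⟫_ℝ t := by
  have hcomp := hf.hasFDerivAt.comp_hasDerivAt t (hasDerivAt_lineMap (a := a) (b := b) (x := t))
  rwa [toDual_apply_apply] at hcomp

lemma ConvexOn.inner_le_sub_of_hasGradientAt [CompleteSpace E] {s : Set E} {f : E → ℝ}
    {f' a b : E} (hf : ConvexOn ℝ s f) (ha : a ∈ s) (hb : b ∈ s) (hgrad : HasGradientAt f f' a) :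
    ⟪f', b - a⟫_ℝ ≤ f b - f a := by
  have hline : ConvexOn ℝ (lineMap a b ⁻¹' s) (f ∘ lineMap a b) := hf.comp_affineMap _
  have hderiv := (lineMap_apply_zero a b (k := ℝ) ▸ hgrad).hasDerivAt_comp_lineMap
  simpa [slope_def_field] using
    hline.le_slope_of_hasDerivAt (x := 0) (y := 1) (by simpa) (by simpa) one_pos hderiv

lemma le_add_inner_add_sq_of_lipschitz_gradient [CompleteSpace E] {h : E → ℝ} {G : E → E}
    {L : ℝ} (hgrad : ∀ x, HasGradientAt h (G x) x) (hLip : ∀ x y, ‖G x - G y‖ ≤ L * ‖x - y‖)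
    (x y : E) : h y ≤ h x + ⟪G x, y - x⟫_ℝ + L / 2 * ‖y - x‖ ^ 2 := by
  set v := y - x
  let ψ : ℝ → ℝ := fun t => h (lineMap x y t) - t * ⟪G x, v⟫_ℝ - L / 2 * ‖v‖ ^ 2 * t ^ 2
  have hψ : ∀ t, HasDerivAt ψ (⟪G (lineMap x y t) - G x, v⟫_ℝ - L * ‖v‖ ^ 2 * t) t := by
    intro t
    refine ((((hgrad (lineMap x y t)).hasDerivAt_comp_lineMap).sub
      ((hasDerivAt_id t).mul_const ⟪G x, v⟫_ℝ)).sub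
      ((hasDerivAt_pow 2 t).const_mul (L / 2 * ‖v‖ ^ 2))).congr_deriv ?_
    simp only [inner_sub_left]
    ring
  have hψ_nonpos : ∀ t ∈ interior (Icc (0 : ℝ) 1),
      ⟪G (lineMap x y t) - G x, v⟫_ℝ - L * ‖v‖ ^ 2 * t ≤ 0 := by
    rw [interior_Icc]
    rintro t ⟨ht₀, -⟩
    have hdist : ‖lineMap x y t - x‖ = t * ‖v‖ := by
      rw [← vsub_eq_sub, lineMap_vsub_left, vsub_eq_sub, norm_smul, Real.norm_of_nonneg ht₀.le]
    refine sub_nonpos.2 ?_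
    calc ⟪G (lineMap x y t) - G x, v⟫_ℝ ≤ ‖G (lineMap x y t) - G x‖ * ‖v‖ :=
          real_inner_le_norm _ _
      _ ≤ L * ‖lineMap x y t - x‖ * ‖v‖ := by gcongr; exact hLip _ _
      _ = L * ‖v‖ ^ 2 * t := by rw [hdist]; ring
  have hanti : AntitoneOn ψ (Icc 0 1) :=
    antitoneOn_of_hasDerivWithinAt_nonpos (convex_Icc 0 1)
      (fun t _ => (hψ t).continuousAt.continuousWithinAt)
      (fun t _ => (hψ t).hasDerivWithinAt) hψ_nonpos
  have hψ_le := hanti (left_mem_Icc.2 zero_le_one) (right_mem_Icc.2 zero_le_one) zero_le_one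
  simp only [ψ, lineMap_apply_zero, lineMap_apply_one] at hψ_le
  linarith

lemma half_mul_norm_sub_sub_inv_smul_sq {L : ℝ} (hL : L ≠ 0) (x a v : E) :
    L / 2 * ‖x - (a - L⁻¹ • v)‖ ^ 2 = L / 2 * ‖x - a‖ ^ 2 + ⟪v, x - a⟫_ℝ + ‖v‖ ^ 2 / (2 * L) := by
  rw [sub_sub_eq_add_sub, add_sub_right_comm, norm_add_sq_real, norm_smul, real_inner_smul_right,
    real_inner_comm, Real.norm_eq_abs, mul_pow, sq_abs]
  field_simp

end

theorem ista_step_descent_general {E : Type*} [NormedAddCommGroup E] [InnerProductSpace ℝ E]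
    [CompleteSpace E] (S : Set E)
    (g h F : E → ℝ) (hF : ∀ x, F x = g x + h x)
    (hg : ConvexOn ℝ S g)
    (hh : ConvexOn ℝ S h)
    (G : E → E) (hgrad : ∀ x, HasGradientAt h (G x) x)
    (L : ℝ) (hL : 0 < L) (hLip : ∀ x y, ‖G x - G y‖ ≤ L * ‖x - y‖)
    (α : E) (hα : α ∈ S) (αp : E) (hαp : αp ∈ S)
    (hprox : ∀ β ∈ S,
      g αp + L / 2 * ‖αp - (α - L⁻¹ • G α)‖ ^ 2 ≤ g β + L / 2 * ‖β - (α - L⁻¹ • G α)‖ ^ 2) :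
    (∀ β ∈ S, F αp ≤ F β + L / 2 * ‖β - α‖ ^ 2 - L / 2 * ‖β - αp‖ ^ 2) ∧ F αp ≤ F α := by
  have hmin : IsMinOn (fun x => g x + L / 2 * ‖x - (α - L⁻¹ • G α)‖ ^ 2) S αp :=
    isMinOn_iff.2 hprox
  have descent : ∀ β ∈ S, F αp ≤ F β + L / 2 * ‖β - α‖ ^ 2 - L / 2 * ‖β - αp‖ ^ 2 := by
    intro β hβ
    have three_point := hmin.add_half_mul_norm_sub_sq_le
      (hg.strongConvexOn_add_half_mul_norm_sub_sq L _) hαp hβ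
    simp only [half_mul_norm_sub_sub_inv_smul_sq hL.ne'] at three_point
    have upper := le_add_inner_add_sq_of_lipschitz_gradient hgrad hLip α αp
    have lower := hh.inner_le_sub_of_hasGradientAt hα hβ (hgrad α)
    rw [hF, hF]
    linarith
  refine ⟨descent, ?_⟩
  have hself := descent α hα
  rw [sub_self, norm_zero] at hself
  linarith [mul_nonneg (half_pos hL).le (sq_nonneg ‖α - αp‖)]

/-- Descent property of one proximal-gradient (ISTA) step: for `F = g + h` with `g` convex
lower semicontinuous (proper on its domain `S`) and `h` convex with `L`-Lipschitz gradient,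
the step `α⁺ = prox_{(1/L)g}(α − (1/L)∇h(α))` satisfies
`F(α⁺) ≤ F(β) + (L/2)‖β − α‖² − (L/2)‖β − α⁺‖²` for all `β ∈ S`; in particular
`F(α⁺) ≤ F(α)`. -/
theorem ista_step_descent {E : Type*} [NormedAddCommGroup E] [InnerProductSpace ℝ E]
    [CompleteSpace E] (S : Set E) (hS : Convex ℝ S)
    (g h F : E → ℝ) (hF : ∀ x, F x = g x + h x)
    (hg : ConvexOn ℝ S g) (hglsc : LowerSemicontinuousOn g S)
    (hh : ConvexOn ℝ S h)
    (G : E → E) (hgrad : ∀ x, HasGradientAt h (G x) x)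
    (L : ℝ) (hL : 0 < L) (hLip : ∀ x y, ‖G x - G y‖ ≤ L * ‖x - y‖)
    (α : E) (hα : α ∈ S) (αp : E) (hαp : αp ∈ S)
    (hprox : ∀ β ∈ S,
      g αp + L / 2 * ‖αp - (α - L⁻¹ • G α)‖ ^ 2 ≤ g β + L / 2 * ‖β - (α - L⁻¹ • G α)‖ ^ 2) :
    (∀ β ∈ S, F αp ≤ F β + L / 2 * ‖β - α‖ ^ 2 - L / 2 * ‖β - αp‖ ^ 2) ∧ F αp ≤ F α :=
  ista_step_descent_general S g h F hF hg hh G hgrad L hL hLip α hα αp hαp hprox
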